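/- arXiv:2107.10817 — 4 statements merged into one kernel-verified Lean document; each statement's English description precedes it below -/
import Mathlib

section
/- If a probabilistic hidden-variable team 𝕐 realizes a probabilistic empirical team 𝕏, then the support of 𝕐, viewed as a hidden-variable team, realizes the support of 𝕏, viewed as an empirical team. -/
open Classical in
/-- The marginal probability `|𝕏_φ|`: the sum of `𝕏 s` over all assignments `s`
(of the finite type `Ω`) satisfying the condition `φ`. -/
noncomputable def marg {Ω : Type} [Fintype Ω] (𝕏 : Ω → ℝ) (φ : Ω → Prop) : ℝ :=
  ∑ s ∈ Finset.univ.filter φ, 𝕏 s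

/-- A probability distribution on a finite type: nonnegative values summing to 1. -/
def IsDistribution {Ω : Type} [Fintype Ω] (𝕏 : Ω → ℝ) : Prop :=
  (∀ s, 0 ≤ 𝕏 s) ∧ ∑ s, 𝕏 s = 1

/-- A probabilistic hidden-variable team `𝕐` realizes a probabilistic empirical
team `𝕏`. -/
def ProbRealizes {n : ℕ} {A B C : Type} [Fintype A] [Fintype B] [Fintype C]
    (𝕐 : ((Fin n → A) × (Fin n → B) × C) → ℝ)
    (𝕏 : ((Fin n → A) × (Fin n → B)) → ℝ) : Prop :=
  ∀ (a : Fin n → A) (b : Fin n → B),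
    (marg 𝕏 (fun s => s.1 = a) = 0 ↔ marg 𝕐 (fun s => s.1 = a) = 0) ∧
    marg 𝕏 (fun s => s.1 = a ∧ s.2 = b) * marg 𝕐 (fun s => s.1 = a) =
      marg 𝕐 (fun s => s.1 = a ∧ s.2.1 = b) * marg 𝕏 (fun s => s.1 = a)

/-- A (possibilistic) hidden-variable team `Y` realizes an empirical team `X`. -/
def Realizes {n : ℕ} {A B C : Type}
    (Y : Set ((Fin n → A) × (Fin n → B) × C))
    (X : Set ((Fin n → A) × (Fin n → B))) : Prop :=
  X = {ab | ∃ c, (ab.1, ab.2, c) ∈ Y}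


open Classical in
lemma marg_nonneg {Ω : Type} [Fintype Ω] {𝕏 : Ω → ℝ} (h : ∀ s, 0 ≤ 𝕏 s) (φ : Ω → Prop) :
    0 ≤ marg 𝕏 φ := Finset.sum_nonneg fun s _ => h s

open Classical in
lemma le_marg {Ω : Type} [Fintype Ω] {𝕏 : Ω → ℝ} (h : ∀ s, 0 ≤ 𝕏 s) {φ : Ω → Prop}
    {s : Ω} (hs : φ s) : 𝕏 s ≤ marg 𝕏 φ :=
  Finset.single_le_sum (fun t _ => h t) (by simp [hs])

open Classical in
lemma marg_pos_iff {Ω : Type} [Fintype Ω] {𝕏 : Ω → ℝ} (h : ∀ s, 0 ≤ 𝕏 s) (φ : Ω → Prop) :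
    0 < marg 𝕏 φ ↔ ∃ s, φ s ∧ 0 < 𝕏 s := by
  constructor
  · intro hp
    by_contra hc
    push_neg at hc
    have hz : marg 𝕏 φ = 0 := Finset.sum_eq_zero fun s hs => by
      have hm := Finset.mem_filter.mp hs
      exact le_antisymm (hc s hm.2) (h s)
    linarith
  · rintro ⟨s, hφ, hs⟩
    exact lt_of_lt_of_le hs (le_marg h hφ)

/-- If a probabilistic hidden-variable team realizes a probabilistic empirical
team, then the support of the former realizes the support of the latter. -/
theorem probRealizes_implies_support_realizes
    {n : ℕ} (hn : 1 ≤ n) {A B C : Type}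
    [Fintype A] [Fintype B] [Fintype C] [Nonempty A] [Nonempty B] [Nonempty C]
    (𝕏 : ((Fin n → A) × (Fin n → B)) → ℝ)
    (𝕐 : ((Fin n → A) × (Fin n → B) × C) → ℝ)
    (h𝕏 : IsDistribution 𝕏) (h𝕐 : IsDistribution 𝕐)
    (hreal : ProbRealizes 𝕐 𝕏) :
    Realizes {s | 0 < 𝕐 s} {s | 0 < 𝕏 s} := by
  obtain ⟨hX0, _⟩ := h𝕏
  obtain ⟨hY0, _⟩ := h𝕐
  ext ⟨a, b⟩
  simp only [Realizes, Set.mem_setOf_eq]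
  obtain ⟨hiff, heq⟩ := hreal a b
  have hXab : marg 𝕏 (fun s => s.1 = a ∧ s.2 = b) = 𝕏 (a, b) := by
    classical
    rw [marg, Finset.sum_filter, Fintype.sum_eq_single (a, b)]
    · simp
    · rintro ⟨a', b'⟩ hne
      rw [if_neg]
      rintro ⟨rfl, rfl⟩
      exact hne rfl
  rw [hXab] at heq
  constructor
  · intro hpos
    have hMX : 0 < marg 𝕏 (fun s => s.1 = a) :=
      lt_of_lt_of_le hpos (le_marg hX0 (s := (a, b)) rfl)
    have hMY : 0 < marg 𝕐 (fun s => s.1 = a) := by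
      rcases lt_or_eq_of_le (marg_nonneg hY0 (fun s => s.1 = a)) with h | h
      · exact h
      · exact absurd (hiff.mpr h.symm) (ne_of_gt hMX)
    have hpos2 : 0 < marg 𝕐 (fun s => s.1 = a ∧ s.2.1 = b) := by
      nlinarith [mul_pos hpos hMY]
    obtain ⟨⟨a', b', c⟩, ⟨h1, h2⟩, hs⟩ := (marg_pos_iff hY0 _).mp hpos2
    simp only at h1 h2
    subst h1; subst h2
    exact ⟨c, hs⟩
  · rintro ⟨c, hc⟩
    have hMYab : 0 < marg 𝕐 (fun s => s.1 = a ∧ s.2.1 = b) :=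
      lt_of_lt_of_le hc (le_marg hY0 (s := (a, b, c)) ⟨rfl, rfl⟩)
    have hMY : 0 < marg 𝕐 (fun s => s.1 = a) :=
      lt_of_lt_of_le hc (le_marg hY0 (s := (a, b, c)) rfl)
    have hMX : 0 < marg 𝕏 (fun s => s.1 = a) := by
      rcases lt_or_eq_of_le (marg_nonneg hX0 (fun s => s.1 = a)) with h | h
      · exact h
      · exact absurd (hiff.mp h.symm) (ne_of_gt hMY)
    nlinarith [mul_pos hMYab hMX]
end

section
/- Let n = 2 and A = B = Fin 2, and let X be the empirical team consisting of exactly the twelve assignments with (x₀, x₁, y₀, y₁) equal to (0,0,0,0), (0,0,0,1), (0,0,1,1), (0,1,0,0), (0,1,1,0), (0,1,1,1), (1,0,0,0), (1,0,1,0), (1,0,1,1), (1,1,0,0), (1,1,0,1), (1,1,1,1). Then X supports no-signalling, but there is no probabilistic empirical team 𝕏 whose support is X and which supports probabilistic no-signalling. -/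
/-- No-signalling for an empirical team. -/
def NoSignalling {n : ℕ} {A B : Type} (X : Set ((Fin n → A) × (Fin n → B))) : Prop :=
  ∀ i : Fin n, ∀ s ∈ X, ∀ s' ∈ X, s.1 i = s'.1 i →
    ∃ s'' ∈ X, (∀ j, s''.1 j = s.1 j) ∧ s''.2 i = s'.2 i

/-- Probabilistic no-signalling. -/
def ProbNoSignalling (𝕏 : ((Fin 2 → Fin 2) × (Fin 2 → Fin 2)) → ℝ) : Prop :=
  ∀ (i : Fin 2) (a : Fin 2 → Fin 2) (b : Fin 2),
    marg 𝕏 (fun s => ∀ j, s.1 j = a j) * marg 𝕏 (fun s => s.1 i = a i ∧ s.2 i = b) =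
      marg 𝕏 (fun s => (∀ j, s.1 j = a j) ∧ s.2 i = b) * marg 𝕏 (fun s => s.1 i = a i)

/-- The twelve-row no-signalling team that admits no probabilistic realization
supporting probabilistic no-signalling. -/
def BadTeam : Set ((Fin 2 → Fin 2) × (Fin 2 → Fin 2)) :=
  {(![0, 0], ![0, 0]), (![0, 0], ![0, 1]), (![0, 0], ![1, 1]),
   (![0, 1], ![0, 0]), (![0, 1], ![1, 0]), (![0, 1], ![1, 1]),
   (![1, 0], ![0, 0]), (![1, 0], ![1, 0]), (![1, 0], ![1, 1]),
   (![1, 1], ![0, 0]), (![1, 1], ![0, 1]), (![1, 1], ![1, 1])}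

lemma vec_eta' (f : Fin 2 → Fin 2) : ![f 0, f 1] = f := by
  funext i; fin_cases i <;> simp

lemma sum_fun' (h : (Fin 2 → Fin 2) → ℝ) :
    ∑ f, h f = ∑ x0 : Fin 2, ∑ x1 : Fin 2, h ![x0, x1] := by
  have h1 : ∑ f, h f = ∑ p : Fin 2 × Fin 2, h ![p.1, p.2] :=
    Fintype.sum_equiv (piFinTwoEquiv fun _ => Fin 2) _ _ (fun f => by
      simp [piFinTwoEquiv, vec_eta'])
  rw [h1, Fintype.sum_prod_type]

open Classical in
lemma marg_eq' (𝕏 : ((Fin 2 → Fin 2) × (Fin 2 → Fin 2)) → ℝ)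
    (φ : ((Fin 2 → Fin 2) × (Fin 2 → Fin 2)) → Prop) :
    marg 𝕏 φ = ∑ x0 : Fin 2, ∑ x1 : Fin 2, ∑ y0 : Fin 2, ∑ y1 : Fin 2,
      if φ (![x0, x1], ![y0, y1]) then 𝕏 (![x0, x1], ![y0, y1]) else 0 := by
  rw [marg, Finset.sum_filter, Fintype.sum_prod_type, sum_fun']
  congr 1; ext x0; congr 1; ext x1
  exact sum_fun' _

set_option maxHeartbeats 1000000 in
/-- The arithmetic core: the twelve positive probabilities cannot satisfy the
eight no-signalling equations. -/
lemma key_contradiction (a1 a2 a3 b1 b2 b3 c1 c2 c3 d1 d2 d3 : ℝ)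
    (ha1 : 0 < a1) (ha2 : 0 < a2) (ha3 : 0 < a3)
    (hb1 : 0 < b1) (hb2 : 0 < b2) (hb3 : 0 < b3)
    (hc1 : 0 < c1) (hc2 : 0 < c2) (hc3 : 0 < c3)
    (hd1 : 0 < d1) (hd2 : 0 < d2) (hd3 : 0 < d3)
    (hA0 : (a1+a2+a3) * (a1+a2+b1) = (a1+a2) * (a1+a2+a3+b1+b2+b3))
    (hB0 : (b1+b2+b3) * (a1+a2+b1) = b1 * (a1+a2+a3+b1+b2+b3))
    (hC0 : (c1+c2+c3) * (c1+d1+d2) = c1 * (c1+c2+c3+d1+d2+d3))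
    (hD0 : (d1+d2+d3) * (c1+d1+d2) = (d1+d2) * (c1+c2+c3+d1+d2+d3))
    (hA1 : (a1+a2+a3) * (a1+c1+c2) = a1 * (a1+a2+a3+c1+c2+c3))
    (hC1 : (c1+c2+c3) * (a1+c1+c2) = (c1+c2) * (a1+a2+a3+c1+c2+c3))
    (hB1 : (b1+b2+b3) * (b1+b2+d1) = (b1+b2) * (b1+b2+b3+d1+d2+d3))
    (hD1 : (d1+d2+d3) * (b1+b2+d1) = d1 * (b1+b2+b3+d1+d2+d3)) : False := by
  have hN0 : (a1+a2+a3+b1+b2+b3) ≠ 0 := by positivity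
  have hN1 : (c1+c2+c3+d1+d2+d3) ≠ 0 := by positivity
  have hN2 : (a1+a2+a3+c1+c2+c3) ≠ 0 := by positivity
  have hN3 : (b1+b2+b3+d1+d2+d3) ≠ 0 := by positivity
  have E1 : (a1+a2) * (b1+b2+b3) = b1 * (a1+a2+a3) :=
    mul_right_cancel₀ hN0 (by linear_combination (a1+a2+a3) * hB0 - (b1+b2+b3) * hA0)
  have E2 : c1 * (d1+d2+d3) = (d1+d2) * (c1+c2+c3) :=
    mul_right_cancel₀ hN1 (by linear_combination (c1+c2+c3) * hD0 - (d1+d2+d3) * hC0)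
  have E3 : a1 * (c1+c2+c3) = (c1+c2) * (a1+a2+a3) :=
    mul_right_cancel₀ hN2 (by linear_combination (a1+a2+a3) * hC1 - (c1+c2+c3) * hA1)
  have E4 : (b1+b2) * (d1+d2+d3) = d1 * (b1+b2+b3) :=
    mul_right_cancel₀ hN3 (by linear_combination (b1+b2+b3) * hD1 - (d1+d2+d3) * hB1)
  -- ratio chain: P(y0=0|x0=0) < P(y1=0|x1=1) < P(y0=0|x0=1) < P(y1=0|x1=0) < first
  have F1 : a1 * (b1+b2+b3) < b1 * (a1+a2+a3) := by nlinarith [mul_pos ha2 (by linarith : (0:ℝ) < b1+b2+b3)]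
  have F2 : c1 * (a1+a2+a3) < a1 * (c1+c2+c3) := by nlinarith [mul_pos hc2 (by linarith : (0:ℝ) < a1+a2+a3)]
  have F3 : d1 * (c1+c2+c3) < c1 * (d1+d2+d3) := by nlinarith [mul_pos hd2 (by linarith : (0:ℝ) < c1+c2+c3)]
  have F4 : b1 * (d1+d2+d3) < d1 * (b1+b2+b3) := by nlinarith [mul_pos hb2 (by linarith : (0:ℝ) < d1+d2+d3)]
  set A := a1+a2+a3 with hA
  set B := b1+b2+b3 with hB
  set C := c1+c2+c3 with hC
  set D := d1+d2+d3 with hD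
  have hApos : 0 < A := by rw [hA]; linarith
  have hBpos : 0 < B := by rw [hB]; linarith
  have hCpos : 0 < C := by rw [hC]; linarith
  have hDpos : 0 < D := by rw [hD]; linarith
  -- multiply F1 and F2 : (a1*B)*(c1*A) < (b1*A)*(a1*C)
  have H1 : (a1*B)*(c1*A) < (b1*A)*(a1*C) :=
    mul_lt_mul'' F1 F2 (mul_pos ha1 hBpos).le (mul_pos hc1 hApos).le
  have H1' : (a1*A)*(c1*B) < (a1*A)*(b1*C) := by nlinarith [H1]
  have G1 : c1*B < b1*C := lt_of_mul_lt_mul_left H1' (mul_pos ha1 hApos).le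
  have H2 : (c1*B)*(d1*C) < (b1*C)*(c1*D) :=
    mul_lt_mul'' G1 F3 (mul_pos hc1 hBpos).le (mul_pos hd1 hCpos).le
  have H2' : (c1*C)*(d1*B) < (c1*C)*(b1*D) := by nlinarith [H2]
  have G2 : d1*B < b1*D := lt_of_mul_lt_mul_left H2' (mul_pos hc1 hCpos).le
  nlinarith [F4, G2]

/-- `BadTeam` supports no-signalling, but no probabilistic empirical team whose
support is `BadTeam` supports probabilistic no-signalling. -/
theorem noSignalling_team_without_probabilistic_realization :
    NoSignalling BadTeam ∧
      ¬ ∃ 𝕏 : ((Fin 2 → Fin 2) × (Fin 2 → Fin 2)) → ℝ,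
          (∀ s, 0 ≤ 𝕏 s) ∧ (∑ s, 𝕏 s = 1) ∧ {s | 0 < 𝕏 s} = BadTeam ∧
          ProbNoSignalling 𝕏 := by
  constructor
  · simp only [NoSignalling, BadTeam, Set.mem_insert_iff, Set.mem_singleton_iff]
    set_option maxHeartbeats 1000000 in
    set_option synthInstance.maxHeartbeats 400000 in
    set_option synthInstance.maxSize 1024 in
    decide
  · rintro ⟨𝕏, hnn, -, hsupp, h⟩
    have hpos : ∀ s ∈ BadTeam, 0 < 𝕏 s := fun s hs => by
      rw [← hsupp] at hs; exact hs
    have hzero : ∀ s ∉ BadTeam, 𝕏 s = 0 := fun s hs =>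
      le_antisymm (not_lt.1 fun hlt => hs (hsupp ▸ hlt)) (hnn s)
    have hz1 : 𝕏 (![0,0], ![1,0]) = 0 := hzero _ (by
      simp only [BadTeam, Set.mem_insert_iff, Set.mem_singleton_iff]
      set_option synthInstance.maxSize 1024 in
      set_option synthInstance.maxHeartbeats 400000 in
      decide)
    have hz2 : 𝕏 (![0,1], ![0,1]) = 0 := hzero _ (by
      simp only [BadTeam, Set.mem_insert_iff, Set.mem_singleton_iff]
      set_option synthInstance.maxSize 1024 in
      set_option synthInstance.maxHeartbeats 400000 in
      decide)
    have hz3 : 𝕏 (![1,0], ![0,1]) = 0 := hzero _ (by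
      simp only [BadTeam, Set.mem_insert_iff, Set.mem_singleton_iff]
      set_option synthInstance.maxSize 1024 in
      set_option synthInstance.maxHeartbeats 400000 in
      decide)
    have hz4 : 𝕏 (![1,1], ![1,0]) = 0 := hzero _ (by
      simp only [BadTeam, Set.mem_insert_iff, Set.mem_singleton_iff]
      set_option synthInstance.maxSize 1024 in
      set_option synthInstance.maxHeartbeats 400000 in
      decide)
    have hA0 := h 0 ![0,0] 0
    have hB0 := h 0 ![0,1] 0
    have hC0 := h 0 ![1,0] 0
    have hD0 := h 0 ![1,1] 0
    have hA1 := h 1 ![0,0] 0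
    have hB1 := h 1 ![0,1] 0
    have hC1 := h 1 ![1,0] 0
    have hD1 := h 1 ![1,1] 0
    rw [marg_eq', marg_eq', marg_eq', marg_eq'] at hA0 hB0 hC0 hD0 hA1 hB1 hC1 hD1
    simp only [Fin.sum_univ_two, Fin.forall_fin_two, Matrix.cons_val_zero, Matrix.cons_val_one,
      Matrix.head_cons] at hA0 hB0 hC0 hD0 hA1 hB1 hC1 hD1
    norm_num [hz1, hz2, hz3, hz4] at hA0 hB0 hC0 hD0 hA1 hB1 hC1 hD1
    exact key_contradiction
      (𝕏 (![0,0], ![0,0])) (𝕏 (![0,0], ![0,1])) (𝕏 (![0,0], ![1,1]))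
      (𝕏 (![0,1], ![0,0])) (𝕏 (![0,1], ![1,0])) (𝕏 (![0,1], ![1,1]))
      (𝕏 (![1,0], ![0,0])) (𝕏 (![1,0], ![1,0])) (𝕏 (![1,0], ![1,1]))
      (𝕏 (![1,1], ![0,0])) (𝕏 (![1,1], ![0,1])) (𝕏 (![1,1], ![1,1]))
      (hpos _ (by simp [BadTeam])) (hpos _ (by simp [BadTeam])) (hpos _ (by simp [BadTeam]))
      (hpos _ (by simp [BadTeam])) (hpos _ (by simp [BadTeam])) (hpos _ (by simp [BadTeam]))
      (hpos _ (by simp [BadTeam])) (hpos _ (by simp [BadTeam])) (hpos _ (by simp [BadTeam]))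
      (hpos _ (by simp [BadTeam])) (hpos _ (by simp [BadTeam])) (hpos _ (by simp [BadTeam]))
      (by linear_combination hA0) (by linear_combination hB0)
      (by linear_combination hC0) (by linear_combination hD0)
      (by linear_combination hA1) (by linear_combination hC1)
      (by linear_combination hB1) (by linear_combination hD1)
end

section
/- Let X be a nonempty hidden-variable team supporting measurement locality, z-independence, and locality. Then there exists a probabilistic hidden-variable team 𝕏 whose support is X and which supports probabilistic measurement locality, probabilistic z-independence, and probabilistic locality. -/
/-- A hidden-variable team: a set of assignments `(a, b, c)`. -/
abbrev HVTeam (n : ℕ) (A B C : Type) := Set ((Fin n → A) × (Fin n → B) × C)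

/-- Measurement locality (possibilistic). -/
def MeasurementLocality {n : ℕ} {A B C : Type} (X : HVTeam n A B C) : Prop :=
  ∀ i : Fin n, ∀ s ∈ X, ∀ s' ∈ X, s.2.2 = s'.2.2 →
    ∃ s'' ∈ X, s''.2.2 = s.2.2 ∧ s''.1 i = s.1 i ∧ ∀ j, j ≠ i → s''.1 j = s'.1 j

/-- z-independence (possibilistic). -/
def ZIndependence {n : ℕ} {A B C : Type} (X : HVTeam n A B C) : Prop :=
  ∀ s ∈ X, ∀ s' ∈ X, ∃ s'' ∈ X, s''.2.2 = s.2.2 ∧ ∀ i, s''.1 i = s'.1 i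

/-- Locality (possibilistic). -/
def Locality {n : ℕ} {A B C : Type} (X : HVTeam n A B C) : Prop :=
  ∀ f : Fin n → ((Fin n → A) × (Fin n → B) × C), (∀ i, f i ∈ X) →
    (∃ s ∈ X, ∀ i, s.1 i = (f i).1 i ∧ s.2.2 = (f i).2.2) →
    ∃ s' ∈ X, ∀ i, s'.1 i = (f i).1 i ∧ s'.2.1 i = (f i).2.1 i ∧ s'.2.2 = (f i).2.2

/-- Probabilistic measurement locality. -/
def ProbMeasurementLocality {n : ℕ} {A B C : Type} [Fintype A] [Fintype B] [Fintype C]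
    (𝕏 : ((Fin n → A) × (Fin n → B) × C) → ℝ) : Prop :=
  ∀ (i : Fin n) (a : Fin n → A) (γ : C),
    marg 𝕏 (fun s => s.1 i = a i ∧ s.2.2 = γ) *
        marg 𝕏 (fun s => (∀ j, j ≠ i → s.1 j = a j) ∧ s.2.2 = γ) =
      marg 𝕏 (fun s => (∀ j, s.1 j = a j) ∧ s.2.2 = γ) * marg 𝕏 (fun s => s.2.2 = γ)

/-- Probabilistic z-independence. -/
def ProbZIndependence {n : ℕ} {A B C : Type} [Fintype A] [Fintype B] [Fintype C]
    (𝕏 : ((Fin n → A) × (Fin n → B) × C) → ℝ) : Prop :=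
  ∀ (a : Fin n → A) (γ : C),
    marg 𝕏 (fun s => s.2.2 = γ) * marg 𝕏 (fun s => ∀ j, s.1 j = a j) =
      marg 𝕏 (fun s => (∀ j, s.1 j = a j) ∧ s.2.2 = γ)

/-- Probabilistic locality. -/
def ProbLocality {n : ℕ} {A B C : Type} [Fintype A] [Fintype B] [Fintype C]
    (𝕏 : ((Fin n → A) × (Fin n → B) × C) → ℝ) : Prop :=
  ∀ (a : Fin n → A) (b : Fin n → B) (γ : C),
    marg 𝕏 (fun s => (∀ j, s.1 j = a j) ∧ (∀ j, s.2.1 j = b j) ∧ s.2.2 = γ) *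
        ∏ i : Fin n, marg 𝕏 (fun s => s.1 i = a i ∧ s.2.2 = γ) =
      marg 𝕏 (fun s => (∀ j, s.1 j = a j) ∧ s.2.2 = γ) *
        ∏ i : Fin n, marg 𝕏 (fun s => s.1 i = a i ∧ s.2.1 i = b i ∧ s.2.2 = γ)

open Classical Finset

section Aux
variable {n : ℕ} {A B C : Type} [Fintype A] [Fintype B] [Fintype C]

/-- Values of the hidden variable occurring in X. -/
noncomputable def Zset (X : HVTeam n A B C) : Finset C :=
  Finset.univ.filter fun γ => ∃ s ∈ X, s.2.2 = γ

/-- Values of the i-th measurement occurring in X. -/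
noncomputable def Pset (X : HVTeam n A B C) (i : Fin n) : Finset A :=
  Finset.univ.filter fun α => ∃ s ∈ X, s.1 i = α

/-- Values of the i-th outcome occurring together with z = γ, x_i = α. -/
noncomputable def Qset (X : HVTeam n A B C) (γ : C) (i : Fin n) (α : A) : Finset B :=
  Finset.univ.filter fun β => ∃ s ∈ X, s.2.2 = γ ∧ s.1 i = α ∧ s.2.1 i = β

variable {X : HVTeam n A B C}

lemma mem_Zset {γ : C} : γ ∈ Zset X ↔ ∃ s ∈ X, s.2.2 = γ := by
  simp [Zset]

lemma mem_Pset {i : Fin n} {α : A} : α ∈ Pset X i ↔ ∃ s ∈ X, s.1 i = α := by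
  simp [Pset]

lemma mem_Qset {γ : C} {i : Fin n} {α : A} {β : B} :
    β ∈ Qset X γ i α ↔ ∃ s ∈ X, s.2.2 = γ ∧ s.1 i = α ∧ s.2.1 i = β := by
  simp [Qset]

/-- From ML and zI: any combination of possible measurement values occurs with any
occurring hidden-variable value. -/
lemma exists_of_mem_Pset (hML : MeasurementLocality X) (hzI : ZIndependence X)
    {γ : C} (hγ : γ ∈ Zset X) (a : Fin n → A) (ha : ∀ i, a i ∈ Pset X i) :
    ∃ s ∈ X, s.2.2 = γ ∧ ∀ i, s.1 i = a i := by
  obtain ⟨s0, hs0, hs0γ⟩ := mem_Zset.mp hγ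
  -- for each i, find t i ∈ X with z = γ and x_i = a i
  have ht : ∀ i : Fin n, ∃ t ∈ X, t.2.2 = γ ∧ t.1 i = a i := by
    intro i
    obtain ⟨u, hu, hui⟩ := mem_Pset.mp (ha i)
    obtain ⟨t, htX, htz, htx⟩ := hzI s0 hs0 u hu
    exact ⟨t, htX, htz.trans hs0γ, (htx i).trans hui⟩
  -- induction: for each k, find s ∈ X with z = γ and x_i = a i for i < k
  have key : ∀ k : ℕ, ∃ s ∈ X, s.2.2 = γ ∧ ∀ i : Fin n, (i : ℕ) < k → s.1 i = a i := by
    intro k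
    induction k with
    | zero => exact ⟨s0, hs0, hs0γ, fun i h => absurd h (Nat.not_lt_zero _)⟩
    | succ k ih =>
      obtain ⟨u, huX, huz, hux⟩ := ih
      by_cases hk : k < n
      · obtain ⟨t, htX, htz, htx⟩ := ht ⟨k, hk⟩
        obtain ⟨v, hvX, hvz, hvk, hvj⟩ := hML ⟨k, hk⟩ t htX u huX (htz.trans huz.symm)
        refine ⟨v, hvX, hvz.trans htz, fun i hi => ?_⟩
        by_cases hik : i = ⟨k, hk⟩
        · subst hik; exact hvk.trans htx
        · refine (hvj i hik).trans (hux i ?_)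
          have : (i : ℕ) ≠ k := fun h => hik (Fin.ext h)
          omega
      · exact ⟨u, huX, huz, fun i hi => hux i (lt_of_lt_of_le i.isLt (Nat.not_lt.mp hk))⟩
  obtain ⟨s, hsX, hsz, hsx⟩ := key n
  exact ⟨s, hsX, hsz, fun i => hsx i i.isLt⟩

lemma Qset_nonempty (hML : MeasurementLocality X) (hzI : ZIndependence X)
    {γ : C} (hγ : γ ∈ Zset X) {i : Fin n} {α : A} (hα : α ∈ Pset X i) [Nonempty A] :
    (Qset X γ i α).Nonempty := by
  have hne : ∀ j, (Pset X j).Nonempty := by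
    intro j
    obtain ⟨s0, hs0, _⟩ := mem_Zset.mp hγ
    exact ⟨s0.1 j, mem_Pset.mpr ⟨s0, hs0, rfl⟩⟩
  classical
  set a : Fin n → A := fun j => if h : j = i then α else (hne j).choose with ha
  have haP : ∀ j, a j ∈ Pset X j := by
    intro j
    by_cases h : j = i
    · subst h; simpa [a] using hα
    · simpa [a, h] using (hne j).choose_spec
  obtain ⟨s, hsX, hsz, hsx⟩ := exists_of_mem_Pset hML hzI hγ a haP
  refine ⟨s.2.1 i, mem_Qset.mpr ⟨s, hsX, hsz, ?_, rfl⟩⟩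
  simpa [a] using hsx i

/-- Structure theorem: X is exactly the "generalized product". -/
lemma mem_X_iff (hn : 0 < n) (hML : MeasurementLocality X) (hzI : ZIndependence X) (hLoc : Locality X)
    (s : (Fin n → A) × (Fin n → B) × C) :
    s ∈ X ↔ s.2.2 ∈ Zset X ∧ ∀ i, s.1 i ∈ Pset X i ∧ s.2.1 i ∈ Qset X s.2.2 i (s.1 i) := by
  constructor
  · intro hs
    exact ⟨mem_Zset.mpr ⟨s, hs, rfl⟩, fun i =>
      ⟨mem_Pset.mpr ⟨s, hs, rfl⟩, mem_Qset.mpr ⟨s, hs, rfl, rfl, rfl⟩⟩⟩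
  · rintro ⟨hγ, h⟩
    obtain ⟨a, b, γ⟩ := s
    simp only at h hγ ⊢
    have hw : ∀ i : Fin n, ∃ t ∈ X, t.2.2 = γ ∧ t.1 i = a i ∧ t.2.1 i = b i := by
      intro i
      obtain ⟨t, htX, htz, htx, hty⟩ := mem_Qset.mp (h i).2
      exact ⟨t, htX, htz, htx, hty⟩
    choose t htX htz htx hty using hw
    have hwit : ∃ w ∈ X, ∀ i, w.1 i = (t i).1 i ∧ w.2.2 = (t i).2.2 := by
      obtain ⟨w, hwX, hwz, hwx⟩ := exists_of_mem_Pset hML hzI hγ a (fun i => (h i).1)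
      exact ⟨w, hwX, fun i => ⟨(hwx i).trans (htx i).symm, hwz.trans (htz i).symm⟩⟩
    obtain ⟨s', hs'X, hs'⟩ := hLoc t htX hwit
    have heq : s' = (a, b, γ) := by
      refine Prod.ext (funext fun i => ?_) (Prod.ext (funext fun i => ?_) ?_)
      · exact (hs' i).1.trans (htx i)
      · exact (hs' i).2.1.trans (hty i)
      · exact (hs' ⟨0, hn⟩).2.2.trans (htz _)
    exact heq ▸ hs'X

end Aux

section Aux2
open Classical Finset
variable {n : ℕ} {A B C : Type} [Fintype A] [Fintype B] [Fintype C]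

lemma prod_ite_forall {ι : Type} [Fintype ι] (ψ : ι → Prop) (g : ι → ℝ) :
    (if ∀ i, ψ i then ∏ i, g i else 0) = ∏ i, if ψ i then g i else 0 := by
  classical
  by_cases h : ∀ i, ψ i
  · rw [if_pos h]
    exact Finset.prod_congr rfl fun i _ => (if_pos (h i)).symm
  · rw [if_neg h]
    push_neg at h
    obtain ⟨i, hi⟩ := h
    exact (Finset.prod_eq_zero (Finset.mem_univ i) (show (if ψ i then g i else 0) = 0 from if_neg hi)).symm

lemma marg_congr {Ω : Type} [Fintype Ω] (𝕏 : Ω → ℝ) {φ ψ : Ω → Prop}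
    (h : ∀ s, φ s ↔ ψ s) : marg 𝕏 φ = marg 𝕏 ψ := by
  unfold marg
  rw [Finset.sum_filter, Finset.sum_filter]
  exact Finset.sum_congr rfl fun s _ => by by_cases hs : φ s <;> simp [hs, (h s).symm, h s]

lemma marg_sum_z (𝕏 : ((Fin n → A) × (Fin n → B) × C) → ℝ)
    (φ : ((Fin n → A) × (Fin n → B) × C) → Prop) :
    marg 𝕏 φ = ∑ γ : C, marg 𝕏 (fun s => φ s ∧ s.2.2 = γ) := by
  unfold marg
  simp only [Finset.sum_filter]
  rw [Finset.sum_comm]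
  refine Finset.sum_congr rfl fun s _ => ?_
  by_cases hs : φ s <;> simp [hs]

/-- The probability distribution. -/
noncomputable def Xprob (X : HVTeam n A B C) : ((Fin n → A) × (Fin n → B) × C) → ℝ :=
  fun s => if s ∈ X then ((Zset X).card : ℝ)⁻¹ *
    ∏ i, (((Pset X i).card : ℝ)⁻¹ * ((Qset X s.2.2 i (s.1 i)).card : ℝ)⁻¹) else 0

variable {X : HVTeam n A B C}

/-- Master computation of marginals. -/
lemma master (hn : 0 < n) (hML : MeasurementLocality X) (hzI : ZIndependence X)
    (hLoc : Locality X) (γ : C) (φA : Fin n → A → Prop) (φB : Fin n → B → Prop)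
    [∀ i, DecidablePred (φA i)] [∀ i, DecidablePred (φB i)] :
    marg (Xprob X) (fun s => (∀ i, φA i (s.1 i)) ∧ (∀ i, φB i (s.2.1 i)) ∧ s.2.2 = γ) =
    (if γ ∈ Zset X then ((Zset X).card : ℝ)⁻¹ else 0) *
      ∏ i, ∑ α ∈ (Pset X i).filter (φA i), (((Pset X i).card : ℝ)⁻¹ *
        ∑ β ∈ (Qset X γ i α).filter (φB i), ((Qset X γ i α).card : ℝ)⁻¹) := by
  classical
  set cz : ℝ := if γ ∈ Zset X then ((Zset X).card : ℝ)⁻¹ else 0 with hcz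
  set F : Fin n → A → B → ℝ := fun i α β =>
    if φA i α ∧ α ∈ Pset X i then
      (if φB i β ∧ β ∈ Qset X γ i α then
        ((Pset X i).card : ℝ)⁻¹ * ((Qset X γ i α).card : ℝ)⁻¹ else 0)
    else 0 with hF
  have key : ∀ (a : Fin n → A) (b : Fin n → B) (γ' : C),
      (if ((∀ i, φA i (a i)) ∧ (∀ i, φB i (b i)) ∧ γ' = γ) then Xprob X (a, b, γ') else 0)
      = if γ' = γ then cz * ∏ i, F i (a i) (b i) else 0 := by
    intro a b γ'
    by_cases hγ' : γ' = γ
    · subst hγ'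
      rw [if_pos rfl]
      by_cases hZ : γ' ∈ Zset X
      · by_cases hall : ∀ i, (φA i (a i) ∧ a i ∈ Pset X i) ∧
            (φB i (b i) ∧ b i ∈ Qset X γ' i (a i))
        · have hmem : (a, b, γ') ∈ X :=
            (mem_X_iff hn hML hzI hLoc (a, b, γ')).mpr
              ⟨hZ, fun i => ⟨(hall i).1.2, (hall i).2.2⟩⟩
          rw [if_pos ⟨fun i => (hall i).1.1, fun i => (hall i).2.1, rfl⟩]
          simp only [Xprob, hF, hcz]
          rw [if_pos hmem, if_pos hZ]
          refine congrArg _ (Finset.prod_congr rfl fun i _ => ?_)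
          rw [if_pos (hall i).1, if_pos (hall i).2]
        · obtain ⟨i, hi⟩ := not_forall.mp hall
          have hFz : F i (a i) (b i) = 0 := by
            simp only [hF]
            by_cases h1 : φA i (a i) ∧ a i ∈ Pset X i
            · rw [if_pos h1, if_neg (fun h2 => hi ⟨h1, h2⟩)]
            · rw [if_neg h1]
          rw [Finset.prod_eq_zero (Finset.mem_univ i) hFz, mul_zero]
          by_cases hbig : (∀ i, φA i (a i)) ∧ (∀ i, φB i (b i)) ∧ γ' = γ'
          · rw [if_pos hbig]
            have hnm : (a, b, γ') ∉ X := by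
              intro hmem
              obtain ⟨_, hco⟩ := (mem_X_iff hn hML hzI hLoc _).mp hmem
              exact hi ⟨⟨hbig.1 i, (hco i).1⟩, hbig.2.1 i, (hco i).2⟩
            simp [Xprob, hnm]
          · rw [if_neg hbig]
      · have hnm : (a, b, γ') ∉ X := fun h => hZ (mem_Zset.mpr ⟨_, h, rfl⟩)
        simp [Xprob, hnm, hcz, hZ]
    · simp [hγ', fun h : (∀ i, φA i (a i)) ∧ (∀ i, φB i (b i)) ∧ γ' = γ => hγ' h.2.2]
  -- now the summation
  have hg : ∀ (i : Fin n) (α : A), ∑ β : B, F i α β =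
      if φA i α ∧ α ∈ Pset X i then ((Pset X i).card : ℝ)⁻¹ *
        ∑ β ∈ (Qset X γ i α).filter (φB i), ((Qset X γ i α).card : ℝ)⁻¹ else 0 := by
    intro i α
    simp only [hF]
    by_cases h1 : φA i α ∧ α ∈ Pset X i
    · simp only [if_pos h1]
      have hfe : Finset.univ.filter (fun β => φB i β ∧ β ∈ Qset X γ i α) =
          (Qset X γ i α).filter (φB i) := by
        ext β; simp [and_comm]
      rw [← Finset.sum_filter, hfe, Finset.mul_sum]
    · simp only [if_neg h1, Finset.sum_const_zero]
  calc marg (Xprob X)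
        (fun s => (∀ i, φA i (s.1 i)) ∧ (∀ i, φB i (s.2.1 i)) ∧ s.2.2 = γ)
      = ∑ s : (Fin n → A) × (Fin n → B) × C,
          if (∀ i, φA i (s.1 i)) ∧ (∀ i, φB i (s.2.1 i)) ∧ s.2.2 = γ
          then Xprob X s else 0 := by
        rw [marg, Finset.sum_filter]
        exact Finset.sum_congr rfl fun s _ => by split_ifs <;> rfl
    _ = ∑ a : Fin n → A, ∑ b : Fin n → B, ∑ γ' : C,
          if (∀ i, φA i (a i)) ∧ (∀ i, φB i (b i)) ∧ γ' = γ
          then Xprob X (a, b, γ') else 0 := by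
        rw [Fintype.sum_prod_type]
        exact Finset.sum_congr rfl fun a _ => Fintype.sum_prod_type _
    _ = ∑ a : Fin n → A, ∑ b : Fin n → B, ∑ γ' : C,
          if γ' = γ then cz * ∏ i, F i (a i) (b i) else 0 := by
        simp only [key]
    _ = ∑ a : Fin n → A, ∑ b : Fin n → B, cz * ∏ i, F i (a i) (b i) := by
        simp
    _ = cz * ∑ a : Fin n → A, ∑ b : Fin n → B, ∏ i, F i (a i) (b i) := by
        simp only [← Finset.mul_sum]
    _ = cz * ∑ a : Fin n → A, ∏ i, ∑ β : B, F i (a i) β := by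
        congr 1
        refine Finset.sum_congr rfl fun a _ => ?_
        rw [Finset.prod_univ_sum, Fintype.piFinset_univ]
    _ = cz * ∏ i, ∑ α : A, ∑ β : B, F i α β := by
        congr 1
        rw [Finset.prod_univ_sum, Fintype.piFinset_univ]
    _ = cz * ∏ i, ∑ α ∈ (Pset X i).filter (φA i), (((Pset X i).card : ℝ)⁻¹ *
          ∑ β ∈ (Qset X γ i α).filter (φB i), ((Qset X γ i α).card : ℝ)⁻¹) := by
        congr 1
        refine Finset.prod_congr rfl fun i _ => ?_
        simp only [hg]
        have hfe : Finset.univ.filter (fun α => φA i α ∧ α ∈ Pset X i) =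
            (Pset X i).filter (φA i) := by
          ext α; simp [and_comm]
        rw [← Finset.sum_filter, hfe]

end Aux2

section Aux3
open Classical Finset
variable {n : ℕ} {A B C : Type} [Fintype A] [Fintype B] [Fintype C] [Nonempty A]
variable {X : HVTeam n A B C}

/-- Weight of a hidden-variable value. -/
noncomputable def cZf (X : HVTeam n A B C) (γ : C) : ℝ :=
  if γ ∈ Zset X then ((Zset X).card : ℝ)⁻¹ else 0

/-- Weight of a measurement value. -/
noncomputable def ePf (X : HVTeam n A B C) (i : Fin n) (α : A) : ℝ :=
  if α ∈ Pset X i then ((Pset X i).card : ℝ)⁻¹ else 0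

/-- Conditional weight of an outcome value. -/
noncomputable def eQf (X : HVTeam n A B C) (γ : C) (i : Fin n) (α : A) (β : B) : ℝ :=
  if β ∈ Qset X γ i α then ((Qset X γ i α).card : ℝ)⁻¹ else 0


open Classical in
lemma filter_eq_single {δ : Type} (s : Finset δ) (b : δ) [DecidablePred (fun x : δ => x = b)] :
    s.filter (fun x => x = b) = if b ∈ s then {b} else ∅ := by
  ext x
  by_cases h : b ∈ s <;> simp only [Finset.mem_filter, h, if_true, if_false,
    Finset.mem_singleton, Finset.notMem_empty, iff_false] <;> first
    | (constructor
       · rintro ⟨_, rfl⟩; rfl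
       · rintro rfl; exact ⟨h, rfl⟩)
    | (rintro ⟨hx, rfl⟩; exact h hx)

lemma Pset_nonempty (hne : X.Nonempty) (i : Fin n) : (Pset X i).Nonempty :=
  ⟨hne.choose.1 i, mem_Pset.mpr ⟨hne.choose, hne.choose_spec, rfl⟩⟩

lemma Pc_ne (hne : X.Nonempty) (i : Fin n) : ((Pset X i).card : ℝ) ≠ 0 :=
  Nat.cast_ne_zero.mpr (Finset.card_ne_zero_of_mem (Pset_nonempty hne i).choose_spec)

lemma Zset_nonempty (hne : X.Nonempty) : (Zset X).Nonempty :=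
  ⟨hne.choose.2.2, mem_Zset.mpr ⟨hne.choose, hne.choose_spec, rfl⟩⟩

lemma Zc_ne (hne : X.Nonempty) : ((Zset X).card : ℝ) ≠ 0 :=
  Nat.cast_ne_zero.mpr (Finset.card_ne_zero_of_mem (Zset_nonempty hne).choose_spec)

lemma sumQ (hML : MeasurementLocality X) (hzI : ZIndependence X) {γ : C} (hZ : γ ∈ Zset X)
    (i : Fin n) {α : A} (hα : α ∈ Pset X i) :
    ∑ _β ∈ Qset X γ i α, ((Qset X γ i α).card : ℝ)⁻¹ = 1 := by
  rw [Finset.sum_const, nsmul_eq_mul, mul_inv_cancel₀]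
  exact Nat.cast_ne_zero.mpr
    (Finset.card_ne_zero_of_mem (Qset_nonempty hML hzI hZ hα).choose_spec)

lemma facTT (hne : X.Nonempty) (hML : MeasurementLocality X) (hzI : ZIndependence X)
    {γ : C} (hZ : γ ∈ Zset X) (i : Fin n) :
    ∑ α ∈ Pset X i, (((Pset X i).card : ℝ)⁻¹ *
      ∑ β ∈ Qset X γ i α, ((Qset X γ i α).card : ℝ)⁻¹) = 1 := by
  rw [Finset.sum_congr rfl (fun α hα => by rw [sumQ hML hzI hZ i hα, mul_one])]
  rw [Finset.sum_const, nsmul_eq_mul, mul_inv_cancel₀ (Pc_ne hne i)]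

lemma facET (hML : MeasurementLocality X) (hzI : ZIndependence X)
    {γ : C} (hZ : γ ∈ Zset X) (i : Fin n) (α0 : A) :
    ∑ α ∈ (Pset X i).filter (· = α0), (((Pset X i).card : ℝ)⁻¹ *
      ∑ β ∈ Qset X γ i α, ((Qset X γ i α).card : ℝ)⁻¹) = ePf X i α0 := by
  rw [filter_eq_single]
  by_cases h : α0 ∈ Pset X i
  · rw [if_pos h, Finset.sum_singleton, sumQ hML hzI hZ i h, mul_one, ePf, if_pos h]
  · rw [if_neg h, Finset.sum_empty, ePf, if_neg h]

lemma facEE {γ : C} (i : Fin n) (α0 : A) (β0 : B) :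
    ∑ α ∈ (Pset X i).filter (· = α0), (((Pset X i).card : ℝ)⁻¹ *
      ∑ β ∈ (Qset X γ i α).filter (· = β0), ((Qset X γ i α).card : ℝ)⁻¹)
    = ePf X i α0 * eQf X γ i α0 β0 := by
  rw [filter_eq_single]
  by_cases h : α0 ∈ Pset X i
  · rw [if_pos h, Finset.sum_singleton, ePf, if_pos h]
    rw [filter_eq_single]
    by_cases h2 : β0 ∈ Qset X γ i α0
    · rw [if_pos h2, Finset.sum_singleton, eQf, if_pos h2]
    · simp [eQf, h2]
  · rw [if_neg h, Finset.sum_empty, ePf, if_neg h, zero_mul]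

end Aux3

section Aux4
open Classical Finset
variable {n : ℕ} {A B C : Type} [Fintype A] [Fintype B] [Fintype C] [Nonempty A]
variable {X : HVTeam n A B C}

lemma Mz (hn : 0 < n) (hne : X.Nonempty) (hML : MeasurementLocality X)
    (hzI : ZIndependence X) (hLoc : Locality X) (γ : C) :
    marg (Xprob X) (fun s => s.2.2 = γ) = cZf X γ := by
  have hiff : ∀ s : (Fin n → A) × (Fin n → B) × C, (s.2.2 = γ) ↔
      ((∀ j : Fin n, True) ∧ (∀ j : Fin n, True) ∧ s.2.2 = γ) := by
    intro s; simp
  rw [marg_congr (Xprob X) hiff,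
    master hn hML hzI hLoc γ (fun _ _ => True) (fun _ _ => True)]
  by_cases hZ : γ ∈ Zset X
  · rw [if_pos hZ]
    simp only [Finset.filter_true]
    rw [Finset.prod_congr rfl (fun i _ => facTT hne hML hzI hZ i),
      Finset.prod_const_one, mul_one, cZf, if_pos hZ]
  · rw [if_neg hZ, zero_mul, cZf, if_neg hZ]

lemma Mxall (hn : 0 < n) (hne : X.Nonempty) (hML : MeasurementLocality X)
    (hzI : ZIndependence X) (hLoc : Locality X) (a : Fin n → A) (γ : C) :
    marg (Xprob X) (fun s => (∀ j, s.1 j = a j) ∧ s.2.2 = γ) =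
      cZf X γ * ∏ j, ePf X j (a j) := by
  have hiff : ∀ s : (Fin n → A) × (Fin n → B) × C,
      ((∀ j, s.1 j = a j) ∧ s.2.2 = γ) ↔
      ((∀ j, s.1 j = a j) ∧ (∀ j : Fin n, True) ∧ s.2.2 = γ) := by
    intro s; simp
  rw [marg_congr (Xprob X) hiff,
    master hn hML hzI hLoc γ (fun j α' => α' = a j) (fun _ _ => True)]
  by_cases hZ : γ ∈ Zset X
  · rw [if_pos hZ]
    simp only [Finset.filter_true]
    rw [Finset.prod_congr rfl (fun j _ => facET hML hzI hZ j (a j)), cZf, if_pos hZ]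
  · rw [if_neg hZ, zero_mul, cZf, if_neg hZ, zero_mul]

lemma sum_cZf (hne : X.Nonempty) : ∑ γ : C, cZf X γ = 1 := by
  simp only [cZf]
  rw [Finset.sum_ite_mem, Finset.univ_inter, Finset.sum_const, nsmul_eq_mul,
    mul_inv_cancel₀ (Zc_ne hne)]

lemma Mxa (hn : 0 < n) (hne : X.Nonempty) (hML : MeasurementLocality X)
    (hzI : ZIndependence X) (hLoc : Locality X) (a : Fin n → A) :
    marg (Xprob X) (fun s => ∀ j, s.1 j = a j) = ∏ j, ePf X j (a j) := by
  rw [marg_sum_z,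
    Finset.sum_congr rfl (fun γ _ => Mxall hn hne hML hzI hLoc a γ),
    ← Finset.sum_mul, sum_cZf hne, one_mul]

end Aux4

section Aux5
open Classical Finset
variable {n : ℕ} {A B C : Type} [Fintype A] [Fintype B] [Fintype C] [Nonempty A]
variable {X : HVTeam n A B C}

lemma Mxi (hn : 0 < n) (hne : X.Nonempty) (hML : MeasurementLocality X)
    (hzI : ZIndependence X) (hLoc : Locality X) (i : Fin n) (α : A) (γ : C) :
    marg (Xprob X) (fun s => s.1 i = α ∧ s.2.2 = γ) = cZf X γ * ePf X i α := by
  have hiff : ∀ s : (Fin n → A) × (Fin n → B) × C, (s.1 i = α ∧ s.2.2 = γ) ↔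
      ((∀ j, j = i → s.1 j = α) ∧ (∀ j : Fin n, True) ∧ s.2.2 = γ) := by
    intro s
    constructor
    · rintro ⟨h1, h2⟩; exact ⟨fun j hj => hj ▸ h1, fun _ => trivial, h2⟩
    · rintro ⟨h1, _, h2⟩; exact ⟨h1 i rfl, h2⟩
  rw [marg_congr (Xprob X) hiff,
    master hn hML hzI hLoc γ (fun j α' => j = i → α' = α) (fun _ _ => True)]
  by_cases hZ : γ ∈ Zset X
  · rw [if_pos hZ, cZf, if_pos hZ]
    simp only [Finset.filter_true]
    congr 1
    rw [← Finset.prod_erase_mul Finset.univ _ (Finset.mem_univ i)]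
    refine Eq.trans (congrArg₂ (· * ·) (Finset.prod_eq_one fun j hj => ?_) ?_) (one_mul _)
    · rw [Finset.filter_true_of_mem (fun x _ hji' => absurd hji' (Finset.ne_of_mem_erase hj))]
      exact facTT hne hML hzI hZ j
    · rw [Finset.filter_congr (q := fun α' => α' = α) (fun x _ => by simp)]
      exact facET hML hzI hZ i α
  · rw [if_neg hZ, zero_mul, cZf, if_neg hZ, zero_mul]

lemma Mxne (hn : 0 < n) (hne : X.Nonempty) (hML : MeasurementLocality X)
    (hzI : ZIndependence X) (hLoc : Locality X) (i : Fin n) (a : Fin n → A) (γ : C) :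
    marg (Xprob X) (fun s => (∀ j, j ≠ i → s.1 j = a j) ∧ s.2.2 = γ) =
      cZf X γ * ∏ j ∈ Finset.univ.erase i, ePf X j (a j) := by
  have hiff : ∀ s : (Fin n → A) × (Fin n → B) × C,
      ((∀ j, j ≠ i → s.1 j = a j) ∧ s.2.2 = γ) ↔
      ((∀ j, j ≠ i → s.1 j = a j) ∧ (∀ j : Fin n, True) ∧ s.2.2 = γ) := by
    intro s; simp
  rw [marg_congr (Xprob X) hiff,
    master hn hML hzI hLoc γ (fun j α' => j ≠ i → α' = a j) (fun _ _ => True)]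
  by_cases hZ : γ ∈ Zset X
  · rw [if_pos hZ, cZf, if_pos hZ]
    simp only [Finset.filter_true]
    congr 1
    rw [← Finset.prod_erase_mul Finset.univ _ (Finset.mem_univ i)]
    refine Eq.trans (congrArg₂ (· * ·)
      (Finset.prod_congr rfl fun j hj => ?_) ?_) (mul_one _)
    · rw [Finset.filter_congr (q := fun α' => α' = a j)
        (fun x _ => by simp [Finset.ne_of_mem_erase hj])]
      exact facET hML hzI hZ j (a j)
    · rw [Finset.filter_true_of_mem (fun x _ hii => absurd rfl hii)]
      exact facTT hne hML hzI hZ i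
  · rw [if_neg hZ, zero_mul, cZf, if_neg hZ, zero_mul]

lemma Mxyall (hn : 0 < n) (hne : X.Nonempty) (hML : MeasurementLocality X)
    (hzI : ZIndependence X) (hLoc : Locality X) (a : Fin n → A) (b : Fin n → B) (γ : C) :
    marg (Xprob X) (fun s => (∀ j, s.1 j = a j) ∧ (∀ j, s.2.1 j = b j) ∧ s.2.2 = γ) =
      cZf X γ * ∏ j, (ePf X j (a j) * eQf X γ j (a j) (b j)) := by
  rw [master hn hML hzI hLoc γ (fun j α' => α' = a j) (fun j β' => β' = b j)]
  by_cases hZ : γ ∈ Zset X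
  · rw [if_pos hZ, cZf, if_pos hZ]
    congr 1
    refine Finset.prod_congr rfl fun j _ => ?_
    exact facEE (X := X) (γ := γ) j (a j) (b j)
  · rw [if_neg hZ, zero_mul, cZf, if_neg hZ, zero_mul]

lemma Mxyi (hn : 0 < n) (hne : X.Nonempty) (hML : MeasurementLocality X)
    (hzI : ZIndependence X) (hLoc : Locality X) (i : Fin n) (α : A) (β : B) (γ : C) :
    marg (Xprob X) (fun s => s.1 i = α ∧ s.2.1 i = β ∧ s.2.2 = γ) =
      cZf X γ * (ePf X i α * eQf X γ i α β) := by
  have hiff : ∀ s : (Fin n → A) × (Fin n → B) × C,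
      (s.1 i = α ∧ s.2.1 i = β ∧ s.2.2 = γ) ↔
      ((∀ j, j = i → s.1 j = α) ∧ (∀ j, j = i → s.2.1 j = β) ∧ s.2.2 = γ) := by
    intro s
    constructor
    · rintro ⟨h1, h2, h3⟩
      exact ⟨fun j hj => hj ▸ h1, fun j hj => hj ▸ h2, h3⟩
    · rintro ⟨h1, h2, h3⟩; exact ⟨h1 i rfl, h2 i rfl, h3⟩
  rw [marg_congr (Xprob X) hiff,
    master hn hML hzI hLoc γ (fun j α' => j = i → α' = α) (fun j β' => j = i → β' = β)]
  by_cases hZ : γ ∈ Zset X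
  · rw [if_pos hZ, cZf, if_pos hZ]
    congr 1
    rw [← Finset.prod_erase_mul Finset.univ _ (Finset.mem_univ i)]
    refine Eq.trans (congrArg₂ (· * ·) (Finset.prod_eq_one fun j hj => ?_) ?_) (one_mul _)
    · have hji := Finset.ne_of_mem_erase hj
      rw [Finset.filter_true_of_mem (fun x _ hji' => absurd hji' hji)]
      refine Eq.trans (Finset.sum_congr rfl fun α' hα' => ?_) (facTT hne hML hzI hZ j)
      refine congrArg _ ?_
      rw [Finset.filter_true_of_mem (fun x _ hji' => absurd hji' hji)]
    · refine Eq.trans ?_ (facEE (X := X) (γ := γ) i α β)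
      refine Finset.sum_congr (Finset.filter_congr fun x _ => by simp) fun α' _ => ?_
      refine congrArg _ ?_
      rw [Finset.filter_congr (q := fun β' => β' = β) (fun x _ => by simp)]
  · rw [if_neg hZ, zero_mul, cZf, if_neg hZ, zero_mul]

end Aux5

section Aux6
open Classical Finset
variable {n : ℕ} {A B C : Type} [Fintype A] [Fintype B] [Fintype C] [Nonempty A]
variable {X : HVTeam n A B C}

lemma Xprob_sum (hn : 0 < n) (hne : X.Nonempty) (hML : MeasurementLocality X)
    (hzI : ZIndependence X) (hLoc : Locality X) : ∑ s, Xprob X s = 1 := by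
  have h1 : ∑ s, Xprob X s = marg (Xprob X) (fun _ => True) := by
    rw [marg]
    refine (Finset.sum_congr ?_ fun s _ => rfl).symm
    ext s; simp
  have h2 : ∀ γ : C, marg (Xprob X) (fun s => True ∧ s.2.2 = γ) = cZf X γ := fun γ =>
    (marg_congr (Xprob X) (fun s => by simp)).trans (Mz hn hne hML hzI hLoc γ)
  rw [h1, marg_sum_z, Finset.sum_congr rfl (fun γ _ => h2 γ), sum_cZf hne]

end Aux6
/-- A nonempty hidden-variable team supporting measurement locality,
z-independence and locality is the support of a probabilistic hidden-variable
team supporting probabilistic measurement locality, probabilistic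
z-independence and probabilistic locality. -/
theorem probabilistic_realization_of_ml_zi_local_team
    {n : ℕ} (hn : 1 ≤ n) {A B C : Type}
    [Fintype A] [Fintype B] [Fintype C] [Nonempty A] [Nonempty B] [Nonempty C]
    (X : HVTeam n A B C) (hne : X.Nonempty)
    (hML : MeasurementLocality X) (hzI : ZIndependence X) (hLoc : Locality X) :
    ∃ 𝕏 : ((Fin n → A) × (Fin n → B) × C) → ℝ,
      (∀ s, 0 ≤ 𝕏 s) ∧ (∑ s, 𝕏 s = 1) ∧ {s | 0 < 𝕏 s} = X ∧
      ProbMeasurementLocality 𝕏 ∧ ProbZIndependence 𝕏 ∧ ProbLocality 𝕏 := by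
  classical
  have hn0 : 0 < n := hn
  refine ⟨Xprob X, ?_, ?_, ?_, ?_, ?_, ?_⟩
  · intro s
    by_cases hs : s ∈ X
    · simp only [Xprob, if_pos hs]
      positivity
    · simp only [Xprob, if_neg hs]; exact le_refl 0
  · exact Xprob_sum hn0 hne hML hzI hLoc
  · ext s
    simp only [Set.mem_setOf_eq]
    constructor
    · intro h
      by_contra hs
      rw [show Xprob X s = 0 by simp only [Xprob, if_neg hs]] at h
      exact lt_irrefl 0 h
    · intro hs
      simp only [Xprob, if_pos hs]
      have h1 : (0:ℝ) < ((Zset X).card : ℝ)⁻¹ :=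
        inv_pos.mpr (Nat.cast_pos.mpr (Finset.card_pos.mpr (Zset_nonempty hne)))
      refine mul_pos h1 (Finset.prod_pos fun i _ => mul_pos ?_ ?_)
      · exact inv_pos.mpr (Nat.cast_pos.mpr (Finset.card_pos.mpr (Pset_nonempty hne i)))
      · exact inv_pos.mpr (Nat.cast_pos.mpr (Finset.card_pos.mpr
          ⟨s.2.1 i, mem_Qset.mpr ⟨s, hs, rfl, rfl, rfl⟩⟩))
  · intro i a γ
    rw [Mxi hn0 hne hML hzI hLoc i (a i) γ, Mxne hn0 hne hML hzI hLoc i a γ,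
      Mxall hn0 hne hML hzI hLoc a γ, Mz hn0 hne hML hzI hLoc γ,
      ← Finset.prod_erase_mul Finset.univ (fun j => ePf X j (a j)) (Finset.mem_univ i)]
    ring
  · intro a γ
    rw [Mz hn0 hne hML hzI hLoc γ, Mxa hn0 hne hML hzI hLoc a,
      Mxall hn0 hne hML hzI hLoc a γ]
  · intro a b γ
    rw [Mxyall hn0 hne hML hzI hLoc a b γ, Mxall hn0 hne hML hzI hLoc a γ,
      Finset.prod_congr rfl (fun i _ => Mxi hn0 hne hML hzI hLoc i (a i) γ),
      Finset.prod_congr rfl (fun i _ => Mxyi hn0 hne hML hzI hLoc i (a i) (b i) γ),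
      Finset.prod_mul_distrib, Finset.prod_mul_distrib, Finset.prod_const]
    simp only [Finset.prod_mul_distrib, Finset.prod_const]
    ring
end

section
/- (Maximum entropy characterization) Let X be a nonempty hidden-variable team supporting z-independence, and let 𝕏* be its uniform probabilistic lift. Then 𝕏* is a probabilistic hidden-variable team whose support is X, and for every probabilistic hidden-variable team 𝕐 whose support is X: (i) H(θ_{𝕏*}) ≥ H(θ_𝕐), and (ii) for every (a, b, γ) ∈ X, H(η_{𝕏*}^{a,γ}) ≥ H(η_𝕐^{a,γ}). -/
open Classical in
/-- The entropy `H(p) = −∑_{t, p(t)>0} p(t) · log p(t)` of a nonnegative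
function on a finite type. -/
noncomputable def entropy {Ω : Type} [Fintype Ω] (p : Ω → ℝ) : ℝ :=
  -∑ t ∈ Finset.univ.filter (fun t => 0 < p t), p t * Real.log (p t)

/-- The measurement prior `θ_𝕐` of a probabilistic hidden-variable team. -/
noncomputable def measurementPrior {n : ℕ} {A B C : Type}
    [Fintype A] [Fintype B] [Fintype C]
    (𝕐 : ((Fin n → A) × (Fin n → B) × C) → ℝ) : ((Fin n → A) × C) → ℝ :=
  fun aγ => ∑ b : Fin n → B, 𝕐 (aγ.1, b, aγ.2)

/-- The conditional outcome distribution `η_𝕐^{a,γ}` of a probabilistic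
hidden-variable team. -/
noncomputable def condOutcome {n : ℕ} {A B C : Type}
    [Fintype A] [Fintype B] [Fintype C]
    (𝕐 : ((Fin n → A) × (Fin n → B) × C) → ℝ) (a : Fin n → A) (γ : C) :
    (Fin n → B) → ℝ :=
  fun b => 𝕐 (a, b, γ) / measurementPrior 𝕐 (a, γ)

open Classical in
/-- The uniform probabilistic lift `𝕏*` of a hidden-variable team `X`:
`𝕏*(s) = 1 / (|Γ| · |M| · |O(s(x⃗), s(z))|)` for `s ∈ X` and `0` otherwise,
where `M` is the set of measurement tuples occurring in `X`, `Γ` the set of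
hidden values occurring in `X` and `O(a, γ)` the set of outcome tuples
occurring with `(a, γ)` in `X`. -/
noncomputable def uniformLift {n : ℕ} {A B C : Type}
    [Fintype A] [Fintype B] [Fintype C]
    (X : HVTeam n A B C) : ((Fin n → A) × (Fin n → B) × C) → ℝ :=
  fun s =>
    if s ∈ X then
      1 / (({c | ∃ a b, (a, b, c) ∈ X}.ncard : ℝ) *
           ({a | ∃ b c, (a, b, c) ∈ X}.ncard : ℝ) *
           ({b | (s.1, b, s.2.2) ∈ X}.ncard : ℝ))
    else 0

open Classical

open Classical in
lemma entropy_le_log_card {Ω : Type} [Fintype Ω] {p : Ω → ℝ}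
    (h0 : ∀ t, 0 ≤ p t) (h1 : ∑ t, p t = 1) {N : ℕ} (hN : 0 < N)
    (hcard : (Finset.univ.filter (fun t => 0 < p t)).card ≤ N) :
    entropy p ≤ Real.log N := by
  set S := Finset.univ.filter (fun t => 0 < p t) with hS
  have hNR : (0:ℝ) < N := by exact_mod_cast hN
  have hsum : ∑ t ∈ S, p t = 1 := by
    rw [← h1]
    apply Finset.sum_subset (Finset.subset_univ _)
    intro t _ ht
    simp only [hS, Finset.mem_filter, Finset.mem_univ, true_and, not_lt] at ht
    linarith [h0 t]
  have key : ∀ t ∈ S, -(p t * Real.log (p t)) - p t * Real.log N ≤ 1/N - p t := by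
    intro t ht
    have hpt : 0 < p t := by
      simp only [hS, Finset.mem_filter, Finset.mem_univ, true_and] at ht; exact ht
    have hx : (0:ℝ) < 1 / (N * p t) := by positivity
    have hlog := Real.log_le_sub_one_of_pos hx
    have heq : Real.log (1 / (↑N * p t)) = -(Real.log N) - Real.log (p t) := by
      rw [Real.log_div one_ne_zero (by positivity),
        Real.log_mul (by positivity) (ne_of_gt hpt), Real.log_one]
      ring
    rw [heq] at hlog
    have h2 := mul_le_mul_of_nonneg_left hlog hpt.le
    calc -(p t * Real.log (p t)) - p t * Real.log ↑N
        = p t * (-(Real.log ↑N) - Real.log (p t)) := by ring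
      _ ≤ p t * (1 / (↑N * p t) - 1) := h2
      _ = 1/↑N - p t := by field_simp
  have hsum2 := Finset.sum_le_sum key
  have lhs : ∑ t ∈ S, (-(p t * Real.log (p t)) - p t * Real.log ↑N)
      = entropy p - Real.log ↑N := by
    rw [Finset.sum_sub_distrib, ← Finset.sum_mul, hsum, one_mul]
    simp [entropy, ← hS, Finset.sum_neg_distrib]
  have rhs : ∑ t ∈ S, (1/(N:ℝ) - p t) = S.card / N - 1 := by
    rw [Finset.sum_sub_distrib, hsum, Finset.sum_const, nsmul_eq_mul]
    ring
  rw [lhs, rhs] at hsum2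
  have hle : (S.card : ℝ)/N ≤ 1 := by
    rw [div_le_one hNR]; exact_mod_cast hcard
  linarith

open Classical in
lemma entropy_uniform {Ω : Type} [Fintype Ω] {p : Ω → ℝ} {N : ℕ} (hN : 0 < N)
    (hval : ∀ t, 0 < p t → p t = 1 / N)
    (hcard : (Finset.univ.filter (fun t => 0 < p t)).card = N) :
    entropy p = Real.log N := by
  have hNR : (0:ℝ) < N := by exact_mod_cast hN
  rw [entropy, Finset.sum_congr rfl (fun t ht => by
    rw [hval t (by simpa using ht)]), Finset.sum_const, hcard, nsmul_eq_mul,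
    Real.log_div one_ne_zero (ne_of_gt hNR), Real.log_one]
  field_simp
  ring

lemma ncard_eq_card_filter {α : Type} [Fintype α] (S : Set α) [DecidablePred (· ∈ S)] :
    (Finset.univ.filter (fun x => x ∈ S)).card = S.ncard := by
  have h : Finset.univ.filter (fun x => x ∈ S) = S.toFinset := by
    ext x; simp
  rw [h, Set.ncard_eq_toFinset_card']

/-- Maximum entropy characterization: for a nonempty hidden-variable team `X`
supporting z-independence, the uniform probabilistic lift `𝕏*` of `X` is a
probabilistic hidden-variable team with support `X`, and among all
probabilistic hidden-variable teams `𝕐` with support `X` it maximizes both the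
entropy of the measurement prior and the entropies of all the conditional
outcome distributions. -/
theorem maximum_entropy_characterization
    {n : ℕ} (hn : 1 ≤ n) {A B C : Type}
    [Fintype A] [Fintype B] [Fintype C] [Nonempty A] [Nonempty B] [Nonempty C]
    (X : HVTeam n A B C) (hne : X.Nonempty) (hzI : ZIndependence X) :
    (∀ s, 0 ≤ uniformLift X s) ∧ (∑ s, uniformLift X s = 1) ∧
    {s | 0 < uniformLift X s} = X ∧
    ∀ 𝕐 : ((Fin n → A) × (Fin n → B) × C) → ℝ,
      (∀ s, 0 ≤ 𝕐 s) → (∑ s, 𝕐 s = 1) → {s | 0 < 𝕐 s} = X →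
        entropy (measurementPrior (uniformLift X)) ≥ entropy (measurementPrior 𝕐) ∧
        ∀ s ∈ X, entropy (condOutcome (uniformLift X) s.1 s.2.2) ≥
          entropy (condOutcome 𝕐 s.1 s.2.2) := by
  set Γs : Set C := {c | ∃ a b, (a, b, c) ∈ X} with hΓs
  set Ms : Set (Fin n → A) := {a | ∃ b c, (a, b, c) ∈ X} with hMs
  obtain ⟨⟨a₀, b₀, c₀⟩, hs₀⟩ := hne
  have hNΓ : 0 < Γs.ncard := by
    rw [Set.ncard_pos (Set.toFinite _)]; exact ⟨c₀, a₀, b₀, hs₀⟩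
  have hNM : 0 < Ms.ncard := by
    rw [Set.ncard_pos (Set.toFinite _)]; exact ⟨a₀, b₀, c₀, hs₀⟩
  have hNΓR : (0:ℝ) < Γs.ncard := by exact_mod_cast hNΓ
  have hNMR : (0:ℝ) < Ms.ncard := by exact_mod_cast hNM
  -- the projection is a product
  have hMΓ : ∀ (a : Fin n → A) (γ : C),
      (∃ b, (a, b, γ) ∈ X) ↔ (a ∈ Ms ∧ γ ∈ Γs) := by
    intro a γ
    constructor
    · rintro ⟨b, hb⟩
      exact ⟨⟨b, γ, hb⟩, ⟨a, b, hb⟩⟩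
    · rintro ⟨⟨b', c', hb'⟩, ⟨a'', b'', hb''⟩⟩
      obtain ⟨s'', hs'', hz, hx⟩ := hzI (a'', b'', γ) hb'' (a, b', c') hb'
      have h1 : s''.1 = a := funext hx
      obtain ⟨sa, sb, sc⟩ := s''
      simp only at h1 hz
      subst h1; subst hz
      exact ⟨sb, hs''⟩
  have hNO : ∀ (a : Fin n → A) (γ : C), (∃ b, (a, b, γ) ∈ X) →
      0 < ({b | (a, b, γ) ∈ X}.ncard) := by
    intro a γ ⟨b, hb⟩
    rw [Set.ncard_pos (Set.toFinite _)]; exact ⟨b, hb⟩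
  -- nonnegativity
  have hnonneg : ∀ s, 0 ≤ uniformLift X s := by
    intro s
    rw [uniformLift]
    split
    · positivity
    · exact le_refl 0
  -- value of the inner sum over b
  have hinner : ∀ (a : Fin n → A) (γ : C), ∑ b, uniformLift X (a, b, γ) =
      if a ∈ Ms ∧ γ ∈ Γs then 1 / ((Γs.ncard : ℝ) * (Ms.ncard : ℝ)) else 0 := by
    intro a γ
    by_cases h : ∃ b, (a, b, γ) ∈ X
    · rw [if_pos ((hMΓ a γ).mp h)]
      have hO := hNO a γ h
      have hOR : (0:ℝ) < ({b | (a, b, γ) ∈ X}.ncard) := by exact_mod_cast hO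
      have hrw : ∀ b, uniformLift X (a, b, γ) =
          if (a, b, γ) ∈ X then
            1 / ((Γs.ncard : ℝ) * (Ms.ncard : ℝ) * ({b | (a, b, γ) ∈ X}.ncard : ℝ))
          else 0 := fun b => rfl
      rw [Finset.sum_congr rfl (fun b _ => hrw b), ← Finset.sum_filter, Finset.sum_const,
        nsmul_eq_mul]
      have hc : (Finset.univ.filter (fun b => (a, b, γ) ∈ X)).card
          = ({b | (a, b, γ) ∈ X}.ncard) := ncard_eq_card_filter _
      rw [hc]
      field_simp
    · rw [if_neg (fun hc => h ((hMΓ a γ).mpr hc))]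
      apply Finset.sum_eq_zero
      intro b _
      have : (a, b, γ) ∉ X := fun hb => h ⟨b, hb⟩
      simp [uniformLift, this]
  -- double sum over the (a, γ) indicator
  have houter : ∀ x : ℝ,
      (∑ a : Fin n → A, ∑ γ : C, (if a ∈ Ms ∧ γ ∈ Γs then x else 0))
        = (Ms.ncard : ℝ) * (Γs.ncard : ℝ) * x := by
    intro x
    have hc : ∀ a : Fin n → A, (∑ γ : C, (if a ∈ Ms ∧ γ ∈ Γs then x else 0))
        = if a ∈ Ms then (Γs.ncard : ℝ) * x else 0 := by
      intro a
      by_cases ha : a ∈ Ms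
      · simp only [ha, true_and, if_pos]
        rw [← Finset.sum_filter, Finset.sum_const, nsmul_eq_mul, ncard_eq_card_filter]
      · simp [ha]
    rw [Finset.sum_congr rfl (fun a _ => hc a), ← Finset.sum_filter, Finset.sum_const,
      nsmul_eq_mul, ncard_eq_card_filter]
    ring
  -- sum to one
  have hsum1 : ∑ s, uniformLift X s = 1 := by
    rw [Fintype.sum_prod_type]
    have : ∀ a : Fin n → A, ∑ bc : (Fin n → B) × C, uniformLift X (a, bc)
        = ∑ γ : C, ∑ b, uniformLift X (a, b, γ) := by
      intro a
      rw [Fintype.sum_prod_type]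
      exact Finset.sum_comm
    rw [Finset.sum_congr rfl (fun a _ => this a)]
    simp_rw [hinner]
    rw [Finset.sum_congr rfl (fun a _ => rfl)]
    rw [houter]
    field_simp
  -- support
  have hsupp : {s | 0 < uniformLift X s} = X := by
    ext s
    simp only [Set.mem_setOf_eq]
    constructor
    · intro h
      by_contra hns
      simp [uniformLift, hns] at h
    · intro hs
      have hO := hNO s.1 s.2.2 ⟨s.2.1, hs⟩
      have hOR : (0:ℝ) < ({b | (s.1, b, s.2.2) ∈ X}.ncard) := by exact_mod_cast hO
      have : uniformLift X s
          = 1 / ((Γs.ncard : ℝ) * (Ms.ncard : ℝ) * ({b | (s.1, b, s.2.2) ∈ X}.ncard : ℝ)) := by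
        simp [uniformLift, hs]
        exact Or.inl rfl
      rw [this]
      positivity
  refine ⟨hnonneg, hsum1, hsupp, ?_⟩
  intro 𝕐 hY0 hY1 hYsupp
  have hYmem : ∀ s, 0 < 𝕐 s ↔ s ∈ X := fun s => Set.ext_iff.mp hYsupp s
  have hYzero : ∀ s, s ∉ X → 𝕐 s = 0 := by
    intro s hs
    by_contra h
    exact hs ((hYmem s).mp (lt_of_le_of_ne (hY0 s) (Ne.symm h)))
  -- measurement prior of the uniform lift
  have hθ : ∀ aγ : (Fin n → A) × C, measurementPrior (uniformLift X) aγ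
      = if aγ.1 ∈ Ms ∧ aγ.2 ∈ Γs then 1 / ((Γs.ncard : ℝ) * (Ms.ncard : ℝ)) else 0 := by
    intro aγ
    rw [measurementPrior]
    exact hinner aγ.1 aγ.2
  set Nθ : ℕ := Ms.ncard * Γs.ncard with hNθ
  have hNθpos : 0 < Nθ := Nat.mul_pos hNM hNΓ
  have hθfilter : (Finset.univ.filter
      (fun t : (Fin n → A) × C => 0 < measurementPrior (uniformLift X) t))
      = Finset.univ.filter (fun t : (Fin n → A) × C => t.1 ∈ Ms ∧ t.2 ∈ Γs) := by
    apply Finset.filter_congr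
    intro t _
    rw [hθ t]
    constructor
    · intro h
      by_contra hc
      simp [hc] at h
    · intro h
      rw [if_pos h]
      positivity
  have hcardprod : (Finset.univ.filter
      (fun t : (Fin n → A) × C => t.1 ∈ Ms ∧ t.2 ∈ Γs)).card = Nθ := by
    rw [← Finset.univ_product_univ, Finset.filter_product, Finset.card_product,
      ncard_eq_card_filter, ncard_eq_card_filter]
  have hθent : entropy (measurementPrior (uniformLift X)) = Real.log Nθ := by
    apply entropy_uniform hNθpos
    · intro t ht
      rw [hθ t] at ht ⊢
      by_cases h : t.1 ∈ Ms ∧ t.2 ∈ Γs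
      · rw [if_pos h]
        rw [hNθ]
        push_cast
        ring_nf
      · simp [h] at ht
    · rw [hθfilter, hcardprod]
  constructor
  · -- entropy of measurement prior
    rw [ge_iff_le, hθent]
    apply entropy_le_log_card (fun t => Finset.sum_nonneg fun b _ => hY0 _) ?_ hNθpos ?_
    · -- sum of measurementPrior 𝕐 = 1
      show ∑ t : (Fin n → A) × C, measurementPrior 𝕐 t = 1
      have h1 : ∑ s, 𝕐 s = ∑ a, ∑ b : Fin n → B, ∑ γ : C, 𝕐 (a, b, γ) := by
        rw [Fintype.sum_prod_type]
        exact Finset.sum_congr rfl (fun a _ => by rw [Fintype.sum_prod_type])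
      have h2 : ∑ t : (Fin n → A) × C, measurementPrior 𝕐 t
          = ∑ a, ∑ γ : C, ∑ b : Fin n → B, 𝕐 (a, b, γ) := by
        rw [Fintype.sum_prod_type]
        simp [measurementPrior]
      rw [h2, ← hY1, h1]
      exact Finset.sum_congr rfl (fun a _ => Finset.sum_comm)
    · -- support card
      show (Finset.univ.filter
        (fun t : (Fin n → A) × C => 0 < measurementPrior 𝕐 t)).card ≤ Nθ
      have : (Finset.univ.filter (fun t : (Fin n → A) × C => 0 < measurementPrior 𝕐 t))
          = Finset.univ.filter (fun t : (Fin n → A) × C => t.1 ∈ Ms ∧ t.2 ∈ Γs) := by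
        apply Finset.filter_congr
        intro t _
        rw [← hMΓ t.1 t.2]
        constructor
        · intro h
          by_contra hc
          push_neg at hc
          have : measurementPrior 𝕐 t = 0 := by
            apply Finset.sum_eq_zero
            intro b _
            exact hYzero _ (fun hb => (hc b) hb)
          rw [this] at h; exact lt_irrefl 0 h
        · rintro ⟨b, hb⟩
          have h1 : 0 < 𝕐 (t.1, b, t.2) := (hYmem _).mpr hb
          have h2 : 𝕐 (t.1, b, t.2) ≤ measurementPrior 𝕐 t :=
            Finset.single_le_sum (f := fun b => 𝕐 (t.1, b, t.2))
              (fun b _ => hY0 _) (Finset.mem_univ b)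
          linarith
      rw [this, hcardprod]
  · -- conditional outcome distributions
    rintro ⟨a, b₁, γ⟩ hs
    simp only
    have hmem : ∃ b, (a, b, γ) ∈ X := ⟨b₁, hs⟩
    have hmΓ := (hMΓ a γ).mp hmem
    have hO := hNO a γ hmem
    have hOR : (0:ℝ) < ({b | (a, b, γ) ∈ X}.ncard) := by exact_mod_cast hO
    have hθpos : measurementPrior (uniformLift X) (a, γ)
        = 1 / ((Γs.ncard : ℝ) * (Ms.ncard : ℝ)) := by
      rw [hθ (a, γ), if_pos hmΓ]
    have hη : ∀ b, condOutcome (uniformLift X) a γ b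
        = if (a, b, γ) ∈ X then 1 / (({b | (a, b, γ) ∈ X}.ncard : ℝ)) else 0 := by
      intro b
      rw [condOutcome, hθpos]
      by_cases hb : (a, b, γ) ∈ X
      · rw [if_pos hb]
        have : uniformLift X (a, b, γ)
            = 1 / ((Γs.ncard : ℝ) * (Ms.ncard : ℝ) * ({b | (a, b, γ) ∈ X}.ncard : ℝ)) := by
          simp [uniformLift, hb]
          exact Or.inl rfl
        rw [this]
        field_simp
      · rw [if_neg hb]
        have : uniformLift X (a, b, γ) = 0 := by simp [uniformLift, hb]
        rw [this, zero_div]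
    have hηfilter : (Finset.univ.filter (fun b => 0 < condOutcome (uniformLift X) a γ b))
        = Finset.univ.filter (fun b => (a, b, γ) ∈ X) := by
      apply Finset.filter_congr
      intro b _
      rw [hη b]
      constructor
      · intro h
        by_contra hc
        simp [hc] at h
      · intro h
        rw [if_pos h]
        positivity
    have hηcard : (Finset.univ.filter (fun b => (a, b, γ) ∈ X)).card
        = ({b | (a, b, γ) ∈ X}.ncard) := ncard_eq_card_filter _
    have hηent : entropy (condOutcome (uniformLift X) a γ)
        = Real.log ({b | (a, b, γ) ∈ X}.ncard) := by
      apply entropy_uniform hO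
      · intro b hb
        rw [hη b] at hb ⊢
        by_cases h : (a, b, γ) ∈ X
        · rw [if_pos h]
        · simp [h] at hb
      · rw [hηfilter, hηcard]
    rw [ge_iff_le, hηent]
    -- now handle condOutcome 𝕐
    have hθY : 0 < measurementPrior 𝕐 (a, γ) := by
      have h1 : 0 < 𝕐 (a, b₁, γ) := (hYmem _).mpr hs
      have h2 : 𝕐 (a, b₁, γ) ≤ measurementPrior 𝕐 (a, γ) :=
        Finset.single_le_sum (f := fun b => 𝕐 (a, b, γ))
          (fun b _ => hY0 _) (Finset.mem_univ b₁)
      linarith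
    apply entropy_le_log_card
      (fun b => div_nonneg (hY0 _) hθY.le) ?_ hO ?_
    · show ∑ b, condOutcome 𝕐 a γ b = 1
      simp only [condOutcome]
      rw [← Finset.sum_div]
      exact div_self (ne_of_gt hθY)
    · show (Finset.univ.filter (fun b => 0 < condOutcome 𝕐 a γ b)).card
        ≤ ({b | (a, b, γ) ∈ X}.ncard)
      have heq : (Finset.univ.filter (fun b => 0 < condOutcome 𝕐 a γ b))
          = Finset.univ.filter (fun b => (a, b, γ) ∈ X) := by
        apply Finset.filter_congr
        intro b _
        simp only [condOutcome]
        rw [← hYmem]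
        exact div_pos_iff_of_pos_right hθY
      rw [heq, hηcard]
end
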